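/- arXiv:1409.4132 — 3 statements merged into one kernel-verified Lean document; each statement's English description precedes it below -/
import Mathlib

section
/- In a Plurality election with lazy voters and any of the three tie-breaking rules (lexicographic, random candidate, random voter), if a ballot vector b is a pure Nash equilibrium, then every voter either abstains or votes for a candidate in the winning set W(b). -/
open Finset

/-- A ballot vector: each voter either abstains (`none`) or votes for a candidate. -/
abbrev Ballot (n m : ℕ) := Fin n → Option (Fin m)

/-- The plurality score of candidate `c` under ballot vector `b`. -/
def sc {n m : ℕ} (b : Ballot n m) (c : Fin m) : ℕ :=
  (univ.filter fun i => b i = some c).card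

/-- The maximum plurality score. -/
def maxScore {n m : ℕ} (b : Ballot n m) : ℕ :=
  univ.sup fun c : Fin m => sc b c

/-- The winning set `W(b)`: candidates with maximum score. -/
def winSet {n m : ℕ} (b : Ballot n m) : Finset (Fin m) :=
  univ.filter fun c => sc b c = maxScore b

/-- `H(b)`: candidates whose score is the maximum minus one. -/
def Hset {n m : ℕ} (b : Ballot n m) : Finset (Fin m) :=
  univ.filter fun c => sc b c + 1 = maxScore b

/-- `H'(b)`: candidates whose score is the maximum minus two. -/
def H'set {n m : ℕ} (b : Ballot n m) : Finset (Fin m) :=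
  univ.filter fun c => sc b c + 2 = maxScore b

/-- `c` is the winner under lexicographic tie-breaking: the minimum-index member of `W(b)`. -/
def IsLexWin {n m : ℕ} (b : Ballot n m) (c : Fin m) : Prop :=
  c ∈ winSet b ∧ ∀ c' ∈ winSet b, (c : ℕ) ≤ (c' : ℕ)

/-- The (degenerate) lottery induced by lexicographic tie-breaking. -/
def pLex {n m : ℕ} (b : Ballot n m) : Fin m → ℚ := fun c =>
  if c ∈ winSet b ∧ ∀ c' ∈ winSet b, (c : ℕ) ≤ (c' : ℕ) then 1 else 0

/-- The lottery induced by random-candidate tie-breaking: uniform over `W(b)`. -/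
def pRC {n m : ℕ} (b : Ballot n m) : Fin m → ℚ := fun c =>
  if c ∈ winSet b then ((winSet b).card : ℚ)⁻¹ else 0

/-- The lottery induced by random-voter tie-breaking: a uniformly random voter's
favourite member of `W(b)` is elected. -/
def pRV {n m : ℕ} (u : Fin n → Fin m → ℕ) (b : Ballot n m) : Fin m → ℚ := fun c =>
  ((univ.filter fun i : Fin n =>
      c ∈ winSet b ∧ ∀ c' ∈ winSet b, u i c' ≤ u i c).card : ℚ) / (n : ℚ)

/-- Expected utility of a lottery `p` for a voter with utility function `ui`. -/
def EU {m : ℕ} (ui : Fin m → ℕ) (p : Fin m → ℚ) : ℚ := ∑ c, p c * (ui c : ℚ)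

/-- Payoff of lazy voter `i`: expected utility plus a bonus `ε` for abstaining. -/
def lazyU {n m : ℕ} (p : Ballot n m → Fin m → ℚ) (u : Fin n → Fin m → ℕ)
    (ε : ℚ) (i : Fin n) (b : Ballot n m) : ℚ :=
  EU (u i) (p b) + if b i = none then ε else 0

/-- Pure Nash equilibrium of the lazy-voter game. -/
def lazyPNE {n m : ℕ} (p : Ballot n m → Fin m → ℚ) (u : Fin n → Fin m → ℕ)
    (ε : ℚ) (b : Ballot n m) : Prop :=
  ∀ (i : Fin n) (b' : Option (Fin m)),
    lazyU p u ε i (Function.update b i b') ≤ lazyU p u ε i b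

/-- View a non-abstaining (truth-biased) ballot vector as a general ballot vector. -/
def tv {n m : ℕ} (b : Fin n → Fin m) : Ballot n m := fun i => some (b i)

/-- Payoff of truth-biased voter `i`: expected utility plus a bonus `ε` for voting
truthfully (abstention, which would yield `-∞`, is never used). -/
def tbU {n m : ℕ} (p : Ballot n m → Fin m → ℚ) (u : Fin n → Fin m → ℕ)
    (a : Fin n → Fin m) (ε : ℚ) (i : Fin n) (b : Fin n → Fin m) : ℚ :=
  EU (u i) (p (tv b)) + if b i = a i then ε else 0

/-- Pure Nash equilibrium of the truth-biased game. -/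
def tbPNE {n m : ℕ} (p : Ballot n m → Fin m → ℚ) (u : Fin n → Fin m → ℕ)
    (a : Fin n → Fin m) (ε : ℚ) (b : Fin n → Fin m) : Prop :=
  ∀ (i : Fin n) (b' : Fin m),
    tbU p u a ε i (Function.update b i b') ≤ tbU p u a ε i b


theorem stmt0 {n m : ℕ} (hn : 0 < n) (hm : 0 < m)
    (u : Fin n → Fin m → ℕ) (hu : ∀ i, Function.Injective (u i))
    (ε : ℚ) (hε0 : 0 < ε) (hε : ε < min ((m : ℚ)⁻¹) ((n : ℚ)⁻¹))
    (p : Ballot n m → Fin m → ℚ) (hp : p = pLex ∨ p = pRC ∨ p = pRV u)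
    (b : Ballot n m) (hb : lazyPNE p u ε b) :
    ∀ i : Fin n, b i = none ∨ ∃ c ∈ winSet b, b i = some c := by
  intro i
  by_cases hbi : b i = none
  · exact Or.inl hbi
  right
  obtain ⟨c, hc⟩ := Option.ne_none_iff_exists'.mp hbi
  refine ⟨c, ?_, hc⟩
  by_contra hcw
  set b' := Function.update b i none with hb'
  have hsc_ne : ∀ d, d ≠ c → sc b' d = sc b d := by
    intro d hd
    unfold sc
    congr 1
    ext j
    simp only [mem_filter, mem_univ, true_and]
    rcases eq_or_ne j i with rfl | hj
    · simp [hb', hc, hd.symm, (Option.some_injective _).ne_iff.mpr hd.symm]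
    · simp [hb', Function.update_of_ne hj]
  have hmemi : i ∈ univ.filter fun j => b j = some c := by simp [hc]
  have hsc_c : sc b' c + 1 = sc b c := by
    unfold sc
    have heq : (univ.filter fun j => b' j = some c)
        = (univ.filter fun j => b j = some c).erase i := by
      ext j
      simp only [mem_erase, mem_filter, mem_univ, true_and]
      rcases eq_or_ne j i with rfl | hj
      · simp [hb']
      · simp [hb', Function.update_of_ne hj, hj]
    have hpos : 0 < (univ.filter fun j => b j = some c).card :=
      Finset.card_pos.mpr ⟨i, hmemi⟩
    rw [heq, Finset.card_erase_of_mem hmemi]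
    omega
  have hwne : ∃ w, w ∈ winSet b := by
    obtain ⟨w, -, hw⟩ := Finset.exists_mem_eq_sup (univ : Finset (Fin m))
      ⟨⟨0, hm⟩, mem_univ _⟩ (sc b)
    exact ⟨w, Finset.mem_filter.mpr ⟨mem_univ _, hw.symm⟩⟩
  have hcle : sc b c < maxScore b := by
    refine lt_of_le_of_ne (Finset.le_sup (mem_univ c)) fun h => hcw ?_
    simp only [winSet, mem_filter, mem_univ, true_and]; exact h
  have hmax : maxScore b' = maxScore b := by
    apply le_antisymm
    · apply Finset.sup_le
      intro d _
      rcases eq_or_ne d c with rfl | hd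
      · have : sc b' d ≤ sc b d := by omega
        exact this.trans (Finset.le_sup (mem_univ d))
      · rw [hsc_ne d hd]; exact Finset.le_sup (mem_univ d)
    · obtain ⟨w, hw⟩ := hwne
      have hw' : sc b w = maxScore b := by
        simpa [winSet] using hw
      have hwc : w ≠ c := fun h => hcw (h ▸ hw)
      calc maxScore b = sc b' w := by rw [hsc_ne w hwc, hw']
        _ ≤ maxScore b' := Finset.le_sup (mem_univ w)
  have hwin : winSet b' = winSet b := by
    ext d
    simp only [winSet, mem_filter, mem_univ, true_and, hmax]
    rcases eq_or_ne d c with rfl | hd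
    · constructor <;> (intro h; omega)
    · rw [hsc_ne d hd]
  have hp' : p b' = p b := by
    rcases hp with rfl | rfl | rfl
    · funext d; simp [pLex, hwin]
    · funext d; simp [pRC, hwin]
    · funext d; simp [pRV, hwin]
  have hkey := hb i none
  rw [← hb'] at hkey
  unfold lazyU at hkey
  rw [hp'] at hkey
  simp only [hb', Function.update_self, hc, if_pos rfl] at hkey
  simp only [if_true, reduceCtorEq, if_false] at hkey
  linarith
end

section
/- In the lazy-voter model with lexicographic tie-breaking, every pure Nash equilibrium b satisfies |W(b)| ∈ {1, m}; moreover |W(b)| = m holds if and only if b is the trivial ballot (all voters abstain) and every voter ranks candidate c_1 first. -/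
open Finset

section Helpers

variable {n m : ℕ}

lemma winSet_nonempty (hm : 0 < m) (b : Ballot n m) : (winSet b).Nonempty := by
  obtain ⟨c, -, hc⟩ := Finset.exists_mem_eq_sup (univ : Finset (Fin m))
    (univ_nonempty_iff.mpr (Fin.pos_iff_nonempty.mp hm)) (fun c => sc b c)
  exact ⟨c, mem_filter.mpr ⟨mem_univ _, hc.symm⟩⟩

lemma lexWin_unique {b : Ballot n m} {c c' : Fin m}
    (h1 : IsLexWin b c) (h2 : IsLexWin b c') : c = c' :=
  Fin.ext (Nat.le_antisymm (h1.2 c' h2.1) (h2.2 c h1.1))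

lemma lexWin_exists (hm : 0 < m) (b : Ballot n m) : ∃ c, IsLexWin b c :=
  ⟨(winSet b).min' (winSet_nonempty hm b), Finset.min'_mem _ _,
    fun c' hc' => Finset.min'_le _ _ hc'⟩

lemma pLex_of_win {b : Ballot n m} {c : Fin m} (h : IsLexWin b c) : pLex b c = 1 := by
  unfold pLex
  split
  · rfl
  · exact absurd h (by assumption)

lemma pLex_of_not_win {b : Ballot n m} {c : Fin m} (h : ¬ IsLexWin b c) : pLex b c = 0 := by
  unfold pLex
  split
  · exact absurd (by assumption) h
  · rfl

lemma EU_pLex {b : Ballot n m} {c : Fin m} (ui : Fin m → ℕ) (h : IsLexWin b c) :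
    EU ui (pLex b) = (ui c : ℚ) := by
  unfold EU
  rw [Finset.sum_eq_single_of_mem c (mem_univ c)]
  · rw [pLex_of_win h, one_mul]
  · intro x _ hx
    rw [pLex_of_not_win (fun hl => hx (lexWin_unique hl h)), zero_mul]

lemma sc_update_none_le (b : Ballot n m) (i : Fin n) (c : Fin m) :
    sc (Function.update b i none) c ≤ sc b c := by
  apply Finset.card_le_card
  intro j hj
  simp only [mem_filter, mem_univ, true_and, Function.update_apply] at hj ⊢
  split at hj
  · exact absurd hj (by simp)
  · exact hj

lemma sc_update_none_eq (b : Ballot n m) (i : Fin n) {c : Fin m} (h : b i ≠ some c) :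
    sc (Function.update b i none) c = sc b c := by
  unfold sc
  congr 1
  ext j
  simp only [mem_filter, mem_univ, true_and, Function.update_apply]
  split
  · rename_i hji; subst hji; simp [h]
  · rfl

lemma sc_trivial {b : Ballot n m} (h : ∀ j, b j = none) (c : Fin m) : sc b c = 0 := by
  unfold sc
  rw [Finset.card_eq_zero]
  ext j; simp [h j]

lemma winSet_trivial {b : Ballot n m} (h : ∀ j, b j = none) : winSet b = univ := by
  have hms : maxScore b = 0 := by
    unfold maxScore
    simp [sc_trivial h]
  ext c; simp [winSet, sc_trivial h, hms]

lemma sc_single {b : Ballot n m} (h : ∀ j, b j = none) (i : Fin n) (c x : Fin m) :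
    sc (Function.update b i (some c)) x = if x = c then 1 else 0 := by
  unfold sc
  have hset : (univ.filter fun j => Function.update b i (some c) j = some x)
      = if x = c then {i} else ∅ := by
    ext j
    simp only [mem_filter, mem_univ, true_and, Function.update_apply]
    by_cases hji : j = i
    · subst hji
      rcases eq_or_ne x c with hxc | hxc
      · subst hxc; simp
      · simp [hxc, Ne.symm hxc]
    · simp only [if_neg hji, h j]
      split <;> simp [hji]
  rw [hset]
  split <;> simp

lemma winSet_single {b : Ballot n m} (h : ∀ j, b j = none) (i : Fin n) (c : Fin m) :
    winSet (Function.update b i (some c)) = {c} := by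
  have hms : maxScore (Function.update b i (some c)) = 1 := by
    unfold maxScore
    apply le_antisymm
    · exact Finset.sup_le fun x _ => by rw [sc_single h]; split <;> simp
    · refine le_trans (le_of_eq ?_) (Finset.le_sup (mem_univ c))
      rw [sc_single h, if_pos rfl]
  ext x
  simp only [winSet, mem_filter, mem_univ, true_and, hms, sc_single h, mem_singleton]
  split <;> simp_all

end Helpers

theorem stmt2 {n m : ℕ} (hn : 0 < n) (hm : 0 < m)
    (u : Fin n → Fin m → ℕ) (hu : ∀ i, Function.Injective (u i))
    (ε : ℚ) (hε0 : 0 < ε) (hε : ε < min ((m : ℚ)⁻¹) ((n : ℚ)⁻¹))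
    (b : Ballot n m) (hb : lazyPNE pLex u ε b) :
    ((winSet b).card = 1 ∨ (winSet b).card = m) ∧
    ((winSet b).card = m ↔
      (b = fun _ => none) ∧ ∀ (i : Fin n) (c : Fin m), u i c ≤ u i ⟨0, hm⟩) := by
  have hε1 : ε < 1 := by
    have h1m : (1:ℚ) ≤ (m:ℚ) := by exact_mod_cast hm
    calc ε < min ((m:ℚ)⁻¹) ((n:ℚ)⁻¹) := hε
      _ ≤ (m:ℚ)⁻¹ := min_le_left _ _
      _ ≤ 1 := by
        rw [inv_le_one_iff₀]
        right; exact h1m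
  by_cases htriv : ∀ j, b j = none
  · have hW : winSet b = univ := winSet_trivial htriv
    have hcard : (winSet b).card = m := by rw [hW, Finset.card_univ, Fintype.card_fin]
    have hw0 : IsLexWin b ⟨0, hm⟩ :=
      ⟨by rw [hW]; exact mem_univ _, fun c' _ => Nat.zero_le _⟩
    have key : ∀ (i : Fin n) (c : Fin m), u i c ≤ u i ⟨0, hm⟩ := by
      intro i c
      have h1 := hb i (some c)
      unfold lazyU at h1
      have hwin : IsLexWin (Function.update b i (some c)) c := by
        constructor
        · rw [winSet_single htriv]; exact mem_singleton_self c
        · intro c' hc'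
          rw [winSet_single htriv, mem_singleton] at hc'
          subst hc'; exact le_refl _
      rw [EU_pLex (u i) hw0, EU_pLex (u i) hwin, Function.update_self,
        if_pos (htriv i)] at h1
      simp only [reduceCtorEq, if_false] at h1
      have hlt : (u i c : ℚ) < ((u i ⟨0, hm⟩ + 1 : ℕ) : ℚ) := by
        push_cast
        linarith
      exact Nat.lt_succ_iff.mp (by exact_mod_cast hlt)
    exact ⟨Or.inr hcard, ⟨fun _ => ⟨funext htriv, key⟩, fun _ => hcard⟩⟩
  · push_neg at htriv
    obtain ⟨i₀, hi₀⟩ := htriv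
    obtain ⟨c₀, hc₀⟩ := Option.ne_none_iff_exists'.mp hi₀
    obtain ⟨w, hw⟩ := lexWin_exists hm b
    have hscwmax : sc b w = maxScore b := (mem_filter.mp hw.1).2
    -- every cast vote goes to w
    have hv : ∀ (i : Fin n) (c : Fin m), b i = some c → c = w := by
      intro i c hic
      by_contra hcw
      have h1 := hb i none
      have hbine : b i ≠ some w := by
        rw [hic]; intro hh; exact hcw (Option.some.inj hh)
      have hscw : sc (Function.update b i none) w = sc b w :=
        sc_update_none_eq b i hbine
      have hmax : maxScore (Function.update b i none) = maxScore b := by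
        apply le_antisymm
        · exact Finset.sup_le fun x _ =>
            le_trans (sc_update_none_le b i x) (Finset.le_sup (mem_univ x))
        · calc maxScore b = sc b w := hscwmax.symm
            _ = sc (Function.update b i none) w := hscw.symm
            _ ≤ maxScore (Function.update b i none) := Finset.le_sup (mem_univ w)
      have hwin' : IsLexWin (Function.update b i none) w := by
        constructor
        · exact mem_filter.mpr ⟨mem_univ _, by rw [hscw, hmax]; exact hscwmax⟩
        · intro c' hc'
          apply hw.2
          have hge : maxScore b ≤ sc b c' := by
            rw [← hmax, ← (mem_filter.mp hc').2]
            exact sc_update_none_le b i c'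
          exact mem_filter.mpr ⟨mem_univ _,
            le_antisymm (Finset.le_sup (mem_univ c')) hge⟩
      unfold lazyU at h1
      rw [EU_pLex (u i) hw, EU_pLex (u i) hwin', Function.update_self,
        if_pos rfl, hic] at h1
      simp only [reduceCtorEq, if_false] at h1
      linarith
    have hc₀w : b i₀ = some w := by rw [hc₀, hv i₀ c₀ hc₀]
    have hsc0 : ∀ x : Fin m, x ≠ w → sc b x = 0 := by
      intro x hx
      unfold sc
      rw [Finset.card_eq_zero]
      ext j
      simp only [mem_filter, mem_univ, true_and, notMem_empty, iff_false]
      intro hj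
      exact hx (hv j x hj)
    have hscw1 : 1 ≤ sc b w :=
      Finset.card_pos.mpr ⟨i₀, by simp [hc₀w]⟩
    have hWs : winSet b = {w} := by
      ext x
      simp only [winSet, mem_filter, mem_univ, true_and, mem_singleton]
      constructor
      · intro hx
        by_contra hxw
        rw [hsc0 x hxw] at hx
        have : 1 ≤ maxScore b := hscwmax ▸ hscw1
        omega
      · intro hx; subst hx; exact hscwmax
    have hcard1 : (winSet b).card = 1 := by rw [hWs]; simp
    refine ⟨Or.inl hcard1, ?_, fun hcond => ?_⟩
    · intro hcm
      exfalso
      have hm1 : m = 1 := by omega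
      subst hm1
      have h1 := hb i₀ none
      obtain ⟨x, hx⟩ := winSet_nonempty hm (Function.update b i₀ none)
      have hxw : x = w := Subsingleton.elim x w
      subst hxw
      have hwin' : IsLexWin (Function.update b i₀ none) x := by
        refine ⟨hx, fun c' _ => ?_⟩
        rw [Subsingleton.elim x c']
      unfold lazyU at h1
      rw [EU_pLex (u i₀) hw, EU_pLex (u i₀) hwin', Function.update_self,
        if_pos rfl, hc₀w] at h1
      simp only [reduceCtorEq, if_false] at h1
      linarith
    · exfalso
      rw [hcond.1] at hc₀w
      simp at hc₀w
end

section
/- In the lazy-voter model with random candidate or random voter tie-breaking, if a non-trivial ballot vector b is a PNE with |W(b)| ≥ 2, then no voter abstains, and each candidate in W(b) receives exactly n/|W(b)| votes (so |W(b)| divides n). -/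
open Finset

section Aux

variable {n m : ℕ}

lemma sc_le_maxScore (b : Ballot n m) (c : Fin m) : sc b c ≤ maxScore b :=
  Finset.le_sup (Finset.mem_univ c)

lemma mem_winSet_iff {b : Ballot n m} {c : Fin m} :
    c ∈ winSet b ↔ sc b c = maxScore b := by simp [winSet]

lemma sc_update_ne (b : Ballot n m) (i : Fin n) (v : Option (Fin m)) (c : Fin m)
    (h1 : b i ≠ some c) (h2 : v ≠ some c) :
    sc (Function.update b i v) c = sc b c := by
  unfold sc
  congr 1
  apply Finset.filter_congr
  intro j _
  rcases eq_or_ne j i with rfl | hj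
  · simp [h1, h2]
  · simp [Function.update_of_ne hj]

lemma sc_update_some (b : Ballot n m) (i : Fin n) (c : Fin m)
    (h1 : b i ≠ some c) : sc (Function.update b i (some c)) c = sc b c + 1 := by
  unfold sc
  have hset : (univ.filter fun j => Function.update b i (some c) j = some c)
      = insert i (univ.filter fun j => b j = some c) := by
    ext j
    rcases eq_or_ne j i with rfl | hj
    · simp
    · simp [Function.update_of_ne hj, hj]
  rw [hset, Finset.card_insert_of_notMem (by simp [h1])]

lemma sc_update_erase (b : Ballot n m) (i : Fin n) (v : Option (Fin m)) (c : Fin m)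
    (h1 : b i = some c) (h2 : v ≠ some c) :
    sc (Function.update b i v) c + 1 = sc b c := by
  have hset : (univ.filter fun j => b j = some c)
      = insert i (univ.filter fun j => Function.update b i v j = some c) := by
    ext j
    rcases eq_or_ne j i with rfl | hj
    · simp [h1, h2]
    · simp [Function.update_of_ne hj, hj]
  unfold sc
  rw [hset, Finset.card_insert_of_notMem (by simp [h2])]

lemma winSet_increment {b b' : Ballot n m} {cs : Fin m}
    (hcs : cs ∈ winSet b) (h0 : sc b' cs = sc b cs + 1)
    (h : ∀ c, c ≠ cs → sc b' c = sc b c) :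
    winSet b' = {cs} := by
  have hk : sc b cs = maxScore b := mem_winSet_iff.1 hcs
  have hmax : maxScore b' = maxScore b + 1 := by
    apply le_antisymm
    · apply Finset.sup_le
      intro c _
      rcases eq_or_ne c cs with rfl | hc
      · rw [h0, hk]
      · rw [h c hc]; exact le_trans (sc_le_maxScore b c) (Nat.le_succ _)
    · rw [← hk, ← h0]; exact sc_le_maxScore b' cs
  ext c
  simp only [mem_winSet_iff, Finset.mem_singleton, hmax]
  constructor
  · intro hc
    by_contra hne
    rw [h c hne] at hc
    have := sc_le_maxScore b c
    omega
  · rintro rfl; rw [h0, hk]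

lemma winSet_decrement {b b' : Ballot n m} {c0 : Fin m}
    (h0 : sc b' c0 + 1 = sc b c0) (h : ∀ c, c ≠ c0 → sc b' c = sc b c)
    (hex : ∃ c ∈ winSet b, c ≠ c0) :
    winSet b' = (winSet b).erase c0 := by
  obtain ⟨cs, hcsW, hcs0⟩ := hex
  have hk : sc b cs = maxScore b := mem_winSet_iff.1 hcsW
  have hmax : maxScore b' = maxScore b := by
    apply le_antisymm
    · apply Finset.sup_le
      intro c _
      rcases eq_or_ne c c0 with rfl | hc
      · have := sc_le_maxScore b c; omega
      · rw [h c hc]; exact sc_le_maxScore b c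
    · rw [← hk, ← h cs hcs0]; exact sc_le_maxScore b' cs
  ext c
  simp only [mem_winSet_iff, Finset.mem_erase, hmax]
  rcases eq_or_ne c c0 with rfl | hc
  · have h1 := sc_le_maxScore b c
    constructor
    · intro hcc; exfalso; omega
    · rintro ⟨hne, -⟩; exact absurd rfl hne
  · rw [h c hc]; tauto

lemma pRC_nonneg (b : Ballot n m) (c : Fin m) : 0 ≤ pRC b c := by
  unfold pRC; split
  · positivity
  · exact le_refl 0

lemma sum_pRC (hm : 0 < m) (b : Ballot n m) : ∑ c, pRC b c = 1 := by
  have hne := winSet_nonempty hm b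
  unfold pRC
  rw [Finset.sum_ite_mem, Finset.univ_inter, Finset.sum_const, nsmul_eq_mul,
    mul_inv_cancel₀ (Nat.cast_ne_zero.mpr (Finset.card_ne_zero.mpr hne))]

lemma pRC_support {b : Ballot n m} {c : Fin m} (h : pRC b c ≠ 0) : c ∈ winSet b := by
  by_contra hc
  exact h (by unfold pRC; rw [if_neg hc])

lemma pRV_nonneg (u : Fin n → Fin m → ℕ) (b : Ballot n m) (c : Fin m) :
    0 ≤ pRV u b c := by
  unfold pRV; positivity

lemma pRV_support {u : Fin n → Fin m → ℕ} {b : Ballot n m} {c : Fin m}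
    (h : pRV u b c ≠ 0) : c ∈ winSet b := by
  by_contra hc
  apply h
  unfold pRV
  rw [Finset.filter_false_of_mem (fun j _ hj => hc hj.1)]
  simp

lemma sum_pRV (hn : 0 < n) {u : Fin n → Fin m → ℕ}
    (hu : ∀ j, Function.Injective (u j)) (b : Ballot n m)
    (hW : (winSet b).Nonempty) :
    ∑ c, pRV u b c = 1 := by
  unfold pRV
  rw [← Finset.sum_div]
  have key : ∀ j : Fin n, (univ.filter fun c : Fin m =>
      c ∈ winSet b ∧ ∀ c' ∈ winSet b, u j c' ≤ u j c).card = 1 := by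
    intro j
    obtain ⟨c0, hc0W, hc0max⟩ := Finset.exists_max_image (winSet b) (u j) hW
    rw [Finset.card_eq_one]
    refine ⟨c0, ?_⟩
    ext c
    simp only [Finset.mem_filter, Finset.mem_univ, true_and, Finset.mem_singleton]
    constructor
    · rintro ⟨hcW, hcmax⟩
      exact hu j (le_antisymm (hc0max c hcW) (hcmax c0 hc0W))
    · rintro rfl; exact ⟨hc0W, hc0max⟩
  have hcount : (∑ c : Fin m, (univ.filter fun j : Fin n =>
      c ∈ winSet b ∧ ∀ c' ∈ winSet b, u j c' ≤ u j c).card) = n := by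
    calc (∑ c : Fin m, (univ.filter fun j : Fin n =>
          c ∈ winSet b ∧ ∀ c' ∈ winSet b, u j c' ≤ u j c).card)
        = ∑ c : Fin m, ∑ j : Fin n,
            if c ∈ winSet b ∧ ∀ c' ∈ winSet b, u j c' ≤ u j c then 1 else 0 := by
          simp_rw [Finset.card_filter]
      _ = ∑ j : Fin n, ∑ c : Fin m,
            if c ∈ winSet b ∧ ∀ c' ∈ winSet b, u j c' ≤ u j c then 1 else 0 :=
          Finset.sum_comm
      _ = ∑ j : Fin n, (univ.filter fun c : Fin m =>
            c ∈ winSet b ∧ ∀ c' ∈ winSet b, u j c' ≤ u j c).card := by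
          simp_rw [Finset.card_filter]
      _ = ∑ j : Fin n, 1 := by simp_rw [key]
      _ = n := by simp
  rw [show (∑ c : Fin m, ((univ.filter fun j : Fin n =>
      c ∈ winSet b ∧ ∀ c' ∈ winSet b, u j c' ≤ u j c).card : ℚ)) = (n : ℚ) by
    exact_mod_cast congrArg (Nat.cast : ℕ → ℚ) hcount]
  rw [div_self (Nat.cast_ne_zero.mpr hn.ne')]

lemma pRV_allfav (hn : 0 < n) {u : Fin n → Fin m → ℕ}
    (hu : ∀ j, Function.Injective (u j)) {b : Ballot n m} {cs : Fin m}
    (hcs : cs ∈ winSet b) (hall : ∀ j, ∀ c' ∈ winSet b, u j c' ≤ u j cs) :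
    pRV u b = fun c => if c = cs then 1 else 0 := by
  funext c
  unfold pRV
  rcases eq_or_ne c cs with rfl | hc
  · rw [if_pos rfl]
    rw [Finset.filter_true_of_mem (fun j _ => ⟨hcs, hall j⟩)]
    rw [Finset.card_univ, Fintype.card_fin, div_self (Nat.cast_ne_zero.mpr hn.ne')]
  · rw [if_neg hc]
    rw [Finset.filter_false_of_mem (fun j _ hj =>
      hc (hu j (le_antisymm (hall j c hj.1) (hj.2 cs hcs))))]
    simp

lemma pRC_singleton {b : Ballot n m} {cs : Fin m} (h : winSet b = {cs}) :
    pRC b = fun c => if c = cs then 1 else 0 := by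
  funext c
  unfold pRC
  rw [h]
  simp

lemma EU_pointmass (ui : Fin m → ℕ) (cs : Fin m) :
    EU ui (fun c => if c = cs then 1 else 0) = ui cs := by
  unfold EU
  rw [Finset.sum_eq_single cs]
  · simp
  · intro c _ hc; simp [hc]
  · intro h; exact absurd (Finset.mem_univ cs) h

lemma EU_le_sub {p : Fin m → ℚ} {ui : Fin m → ℕ} {M : ℕ} {c0 : Fin m} {δ : ℚ}
    (hpos : ∀ c, 0 ≤ p c) (hsum : ∑ c, p c = 1)
    (hle : ∀ c, p c ≠ 0 → ui c ≤ M)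
    (h0 : ui c0 + 1 ≤ M) (hδ : δ ≤ p c0) :
    EU ui p ≤ (M : ℚ) - δ := by
  have key : ∀ c : Fin m, p c * ui c ≤ p c * M - (if c = c0 then δ else 0) := by
    intro c
    by_cases hc : c = c0
    · subst hc
      rw [if_pos rfl]
      have h1 : (ui c : ℚ) + 1 ≤ (M : ℚ) := by exact_mod_cast h0
      nlinarith [hpos c]
    · rw [if_neg hc, sub_zero]
      by_cases hpc : p c = 0
      · rw [hpc]; simp
      · have h2 : (ui c : ℚ) ≤ (M : ℚ) := by exact_mod_cast hle c hpc
        exact mul_le_mul_of_nonneg_left h2 (hpos c)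
  have : EU ui p ≤ ∑ c, (p c * M - if c = c0 then δ else 0) :=
    Finset.sum_le_sum fun c _ => key c
  calc EU ui p ≤ ∑ c, (p c * M - if c = c0 then δ else 0) := this
    _ = (∑ c, p c) * M - δ := by
        rw [Finset.sum_sub_distrib, ← Finset.sum_mul,
          Finset.sum_ite_eq' univ c0 (fun _ => δ)]
        simp
    _ = (M : ℚ) - δ := by rw [hsum, one_mul]

lemma sum_sc (b : Ballot n m) (hall : ∀ i, b i ≠ none) :
    ∑ c : Fin m, sc b c = n := by
  unfold sc
  calc ∑ c : Fin m, (univ.filter fun i => b i = some c).card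
      = ∑ c : Fin m, ∑ i : Fin n, if b i = some c then 1 else 0 := by
        simp_rw [Finset.card_filter]
    _ = ∑ i : Fin n, ∑ c : Fin m, if b i = some c then 1 else 0 := Finset.sum_comm
    _ = ∑ i : Fin n, 1 := by
        apply Finset.sum_congr rfl
        intro i _
        obtain ⟨c0, hc0⟩ := Option.ne_none_iff_exists'.mp (hall i)
        rw [Finset.sum_eq_single c0]
        · rw [if_pos hc0]
        · intro c _ hc
          rw [if_neg (by rw [hc0]; simp only [Option.some.injEq]
                         exact fun h => hc h.symm)]
        · intro h; exact absurd (Finset.mem_univ c0) h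
    _ = n := by simp

end Aux

theorem stmt5 {n m : ℕ} (hn : 0 < n) (hm : 0 < m)
    (u : Fin n → Fin m → ℕ) (hu : ∀ i, Function.Injective (u i))
    (ε : ℚ) (hε0 : 0 < ε) (hε : ε < min ((m : ℚ)⁻¹) ((n : ℚ)⁻¹))
    (p : Ballot n m → Fin m → ℚ) (hp : p = pRC ∨ p = pRV u)
    (b : Ballot n m) (hb : lazyPNE p u ε b)
    (hnt : ∃ i, b i ≠ none) (hW : 2 ≤ (winSet b).card) :
    (∀ i, b i ≠ none) ∧ (∀ c ∈ winSet b, sc b c * (winSet b).card = n) ∧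
    (winSet b).card ∣ n := by
  classical
  have hmW : (winSet b).Nonempty := winSet_nonempty hm b
  have hwle : (winSet b).card ≤ m := by
    have := Finset.card_le_univ (winSet b)
    simpa using this
  have hwpos : 0 < (winSet b).card := hmW.card_pos
  have hεm : ε < ((m : ℚ))⁻¹ := lt_of_lt_of_le hε (min_le_left _ _)
  have hεn : ε < ((n : ℚ))⁻¹ := lt_of_lt_of_le hε (min_le_right _ _)
  have hp_congr : ∀ b' : Ballot n m, winSet b' = winSet b → p b' = p b := by
    intro b' hW'
    rcases hp with rfl | rfl
    · funext c; unfold pRC; rw [hW']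
    · funext c; unfold pRV; rw [hW']
  -- Step 2 : nobody votes for a loser
  have step2 : ∀ (j : Fin n) (c : Fin m), b j = some c → c ∈ winSet b := by
    intro j c hj
    by_contra hcW
    set b' := Function.update b j none with hb'
    have hdec : sc b' c + 1 = sc b c := sc_update_erase b j none c hj (by simp)
    have hoth : ∀ c', c' ≠ c → sc b' c' = sc b c' := by
      intro c' hc'
      refine sc_update_ne b j none c' ?_ (by simp)
      rw [hj]; simp only [Ne, Option.some.injEq]
      exact fun h => hc' h.symm
    have hex : ∃ cs ∈ winSet b, cs ≠ c := by
      obtain ⟨cs, hcs⟩ := hmW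
      exact ⟨cs, hcs, fun h => hcW (h ▸ hcs)⟩
    have hWeq : winSet b' = winSet b := by
      rw [winSet_decrement hdec hoth hex, Finset.erase_eq_of_notMem hcW]
    have hold : lazyU p u ε j b = EU (u j) (p b) := by
      rw [lazyU, if_neg (by simp [hj]), add_zero]
    have hnew : lazyU p u ε j b' = EU (u j) (p b) + ε := by
      rw [lazyU, hp_congr b' hWeq, if_pos (by simp [hb'])]
    have hle : lazyU p u ε j b' ≤ lazyU p u ε j b := hb j none
    rw [hnew, hold] at hle
    linarith
  -- Step 1 : nobody abstains
  have step1 : ∀ i, b i ≠ none := by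
    intro i hi
    obtain ⟨cs, hcsW, hcsmax⟩ := Finset.exists_max_image (winSet b) (u i) hmW
    set b' := Function.update b i (some cs) with hb'
    have hinc : sc b' cs = sc b cs + 1 :=
      sc_update_some b i cs (by rw [hi]; simp)
    have hoth : ∀ c, c ≠ cs → sc b' c = sc b c := by
      intro c hc
      refine sc_update_ne b i (some cs) c (by rw [hi]; simp) ?_
      simp only [Ne, Option.some.injEq]
      exact fun h => hc h.symm
    have hWs : winSet b' = {cs} := winSet_increment hcsW hinc hoth
    have hEUnew : EU (u i) (p b') = u i cs := by
      rcases hp with rfl | rfl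
      · rw [pRC_singleton hWs, EU_pointmass]
      · rw [pRV_allfav hn hu (b := b')
            (by rw [hWs]; exact Finset.mem_singleton_self cs)
            (by intro j c' hc'; rw [hWs, Finset.mem_singleton] at hc'
                subst hc'; exact le_refl _),
          EU_pointmass]
    rcases hp with rfl | rfl
    · -- random candidate
      obtain ⟨c0, hc0W, hc0ne⟩ := Finset.exists_mem_ne hW cs
      have hgap : u i c0 + 1 ≤ u i cs := by
        have h1 : u i c0 ≤ u i cs := hcsmax c0 hc0W
        have h2 : u i c0 ≠ u i cs := fun h => hc0ne (hu i h)
        omega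
      have hδ : ((winSet b).card : ℚ)⁻¹ ≤ pRC b c0 := by
        unfold pRC; rw [if_pos hc0W]
      have hbound : EU (u i) (pRC b) ≤ (u i cs : ℚ) - ((winSet b).card : ℚ)⁻¹ :=
        EU_le_sub (pRC_nonneg b) (sum_pRC hm b)
          (fun c hc => hcsmax c (pRC_support hc)) hgap hδ
      have hεw : ε < ((winSet b).card : ℚ)⁻¹ := by
        refine lt_of_lt_of_le hεm ?_
        apply inv_anti₀
        · exact_mod_cast hwpos
        · exact_mod_cast hwle
      have hold : lazyU pRC u ε i b = EU (u i) (pRC b) + ε := by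
        rw [lazyU, if_pos hi]
      have hnew : lazyU pRC u ε i b' = u i cs := by
        rw [lazyU, if_neg (by simp [hb']), add_zero, hEUnew]
      have hle : lazyU pRC u ε i b' ≤ lazyU pRC u ε i b := hb i (some cs)
      rw [hnew, hold] at hle
      linarith
    · -- random voter
      by_cases hall : ∀ j, ∀ c' ∈ winSet b, u j c' ≤ u j cs
      · -- already a point mass at cs : a voter of some other winner abstains
        obtain ⟨c0, hc0W, hc0ne⟩ := Finset.exists_mem_ne hW cs
        have hk1 : 1 ≤ maxScore b := by
          obtain ⟨i1, hi1⟩ := hnt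
          obtain ⟨c1, hc1⟩ := Option.ne_none_iff_exists'.mp hi1
          have h1 : 1 ≤ sc b c1 := by
            apply Finset.card_pos.mpr
            exact ⟨i1, by simp [hc1]⟩
          exact le_trans h1 (sc_le_maxScore b c1)
        have hsc1 : 0 < sc b c0 := by
          rw [mem_winSet_iff.1 hc0W]; exact hk1
        obtain ⟨j0, hj0m⟩ := Finset.card_pos.mp hsc1
        have hj0 : b j0 = some c0 := (Finset.mem_filter.mp hj0m).2
        set b'' := Function.update b j0 none with hb''
        have hdec : sc b'' c0 + 1 = sc b c0 :=
          sc_update_erase b j0 none c0 hj0 (by simp)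
        have hoth2 : ∀ c, c ≠ c0 → sc b'' c = sc b c := by
          intro c hc
          refine sc_update_ne b j0 none c ?_ (by simp)
          rw [hj0]; simp only [Ne, Option.some.injEq]
          exact fun h => hc h.symm
        have hW'' : winSet b'' = (winSet b).erase c0 :=
          winSet_decrement hdec hoth2 ⟨cs, hcsW, Ne.symm hc0ne⟩
        have hpb : pRV u b = fun c => if c = cs then 1 else 0 :=
          pRV_allfav hn hu hcsW hall
        have hpb'' : pRV u b'' = fun c => if c = cs then 1 else 0 := by
          apply pRV_allfav hn hu
          · rw [hW'']; exact Finset.mem_erase.2 ⟨Ne.symm hc0ne, hcsW⟩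
          · intro j c' hc'
            rw [hW''] at hc'
            exact hall j c' (Finset.mem_of_mem_erase hc')
        have hold : lazyU (pRV u) u ε j0 b = EU (u j0) (pRV u b) := by
          rw [lazyU, if_neg (by simp [hj0]), add_zero]
        have hnew : lazyU (pRV u) u ε j0 b'' = EU (u j0) (pRV u b) + ε := by
          rw [lazyU, if_pos (by simp [hb'']), hpb'', ← hpb]
        have hle : lazyU (pRV u) u ε j0 b'' ≤ lazyU (pRV u) u ε j0 b := hb j0 none
        rw [hnew, hold] at hle
        linarith
      · push_neg at hall
        obtain ⟨j0, c', hc'W, hgt⟩ := hall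
        obtain ⟨c00, hc00W, hc00max⟩ := Finset.exists_max_image (winSet b) (u j0) hmW
        have hne : c00 ≠ cs := by
          intro h
          have := hc00max c' hc'W
          rw [h] at this
          omega
        have hgap : u i c00 + 1 ≤ u i cs := by
          have h1 : u i c00 ≤ u i cs := hcsmax c00 hc00W
          have h2 : u i c00 ≠ u i cs := fun h => hne (hu i h)
          omega
        have hδ : (n : ℚ)⁻¹ ≤ pRV u b c00 := by
          unfold pRV
          have h1 : (1 : ℚ) ≤ ((univ.filter fun j : Fin n =>
              c00 ∈ winSet b ∧ ∀ c'' ∈ winSet b, u j c'' ≤ u j c00).card : ℚ) := by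
            have : 0 < (univ.filter fun j : Fin n =>
                c00 ∈ winSet b ∧ ∀ c'' ∈ winSet b, u j c'' ≤ u j c00).card :=
              Finset.card_pos.mpr ⟨j0, Finset.mem_filter.2
                ⟨Finset.mem_univ _, hc00W, hc00max⟩⟩
            exact_mod_cast this
          have hn' : (0 : ℚ) < n := by exact_mod_cast hn
          rw [inv_eq_one_div]
          gcongr
        have hbound : EU (u i) (pRV u b) ≤ (u i cs : ℚ) - (n : ℚ)⁻¹ :=
          EU_le_sub (pRV_nonneg u b) (sum_pRV hn hu b hmW)
            (fun c hc => hcsmax c (pRV_support hc)) hgap hδ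
        have hold : lazyU (pRV u) u ε i b = EU (u i) (pRV u b) + ε := by
          rw [lazyU, if_pos hi]
        have hnew : lazyU (pRV u) u ε i b' = u i cs := by
          rw [lazyU, if_neg (by simp [hb']), add_zero, hEUnew]
        have hle : lazyU (pRV u) u ε i b' ≤ lazyU (pRV u) u ε i b := hb i (some cs)
        rw [hnew, hold] at hle
        linarith
  -- Counting
  have hsc0 : ∀ c, c ∉ winSet b → sc b c = 0 := by
    intro c hc
    unfold sc
    rw [Finset.card_eq_zero, Finset.filter_eq_empty_iff]
    intro j _ hj
    exact hc (step2 j c hj)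
  have htot : ∑ c : Fin m, sc b c = n := sum_sc b step1
  have hsumW : ∑ c ∈ winSet b, sc b c = n := by
    rw [Finset.sum_subset (Finset.subset_univ _) (fun c _ hc => hsc0 c hc)]
    exact htot
  have hconst : ∑ c ∈ winSet b, sc b c = (winSet b).card * maxScore b := by
    rw [Finset.sum_congr rfl (fun c hc => mem_winSet_iff.1 hc),
      Finset.sum_const, smul_eq_mul]
  have hkey : (winSet b).card * maxScore b = n := by rw [← hconst, hsumW]
  refine ⟨step1, ?_, ⟨maxScore b, hkey.symm⟩⟩
  intro c hcW
  rw [mem_winSet_iff.1 hcW, mul_comm]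
  exact hkey
end
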